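/- Let ε, η, κ ∈ {1,−1}, a ∈ ℂ with a ≠ 0, and b ∈ ℂ, and set A = [[ε, a],[0, ε]], A' = [[η, 0],[1, η]], B = [[κ, b],[0, κ]], all in SL(2,ℂ). Then 2·trace(A·A') − trace(A)·trace(A') = 2a ≠ 0, 2·trace(B·A') − trace(B)·trace(A') = 2b, and consequently (2·trace(B·A') − trace(B)·trace(A')) / (2·trace(A·A') − trace(A)·trace(A')) = b/a. -/

import Mathlib

open Matrix

theorem two_mul_trace_mul_sub_trace_mul_trace_fin_two_triangular {R : Type*} [CommRing R]
    (e h x : R) :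
    2 * trace (!![e, x; 0, e] * !![h, 0; 1, h]) - trace !![e, x; 0, e] * trace !![h, 0; 1, h] =
      2 * x := by
  simp only [trace_fin_two, mul_fin_two, of_apply, cons_val', cons_val_zero, cons_val_one,
    empty_val', cons_val_fin_one]
  ring

theorem cusp_parameter_trace_identity
    (ε η κ a b : ℂ)
    (ha : a ≠ 0) :
    2 * Matrix.trace (!![ε, a; 0, ε] * !![η, 0; 1, η]) -
        Matrix.trace !![ε, a; 0, (ε : ℂ)] * Matrix.trace !![η, 0; 1, (η : ℂ)] = 2 * a ∧
    2 * a ≠ 0 ∧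
    2 * Matrix.trace (!![κ, b; 0, κ] * !![η, 0; 1, η]) -
        Matrix.trace !![κ, b; 0, (κ : ℂ)] * Matrix.trace !![η, 0; 1, (η : ℂ)] = 2 * b ∧
    (2 * Matrix.trace (!![κ, b; 0, κ] * !![η, 0; 1, η]) -
        Matrix.trace !![κ, b; 0, (κ : ℂ)] * Matrix.trace !![η, 0; 1, (η : ℂ)]) /
      (2 * Matrix.trace (!![ε, a; 0, ε] * !![η, 0; 1, η]) -
        Matrix.trace !![ε, a; 0, (ε : ℂ)] * Matrix.trace !![η, 0; 1, (η : ℂ)]) = b / a := by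
  have hA := two_mul_trace_mul_sub_trace_mul_trace_fin_two_triangular ε η a
  have hB := two_mul_trace_mul_sub_trace_mul_trace_fin_two_triangular κ η b
  refine ⟨hA, mul_ne_zero two_ne_zero ha, hB, ?_⟩
  rw [hA, hB, mul_div_mul_left _ _ two_ne_zero]
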